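/- Let K be a field, V, W vector spaces over K, and R ⊆ V ⊗ V, S ⊆ W ⊗ W subspaces. Let Φ : TensorAlgebra K (V × W) → (TensorAlgebra K V / (R)) ⊗[K] (TensorAlgebra K W / (S)) be the K-algebra homomorphism determined by Φ(ι(v,w)) = (class of ι v) ⊗ 1 + 1 ⊗ (class of ι w). Then Φ is surjective, and its kernel equals the two-sided ideal of TensorAlgebra K (V × W) generated by: (i) the image of R under v⊗v' ↦ ι(v,0)·ι(v',0), (ii) the image of S under w⊗w' ↦ ι(0,w)·ι(0,w'), and (iii) the commutators ι(v,0)·ι(0,w) − ι(0,w)·ι(v,0) for v ∈ V, w ∈ W. -/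

import Mathlib

/-!
`Φ` kills the relations `R`, `S` and `[V, W]`, since `Φ(ι(v,0))` and `Φ(ι(0,w))` are `v ⊗ 1`
and `1 ⊗ w`. Conversely, in `Q = T(V × W)/(R ⊕ S ⊕ [V,W])` the images of `TV` and `TW` factor
through `TV/(R)` and `TW/(S)` and commute with each other, so the universal property of the
tensor product of algebras yields `Ψ : TV/(R) ⊗ TW/(S) → Q` with `Ψ ∘ Φ` the quotient map;
hence `ker Φ` is exactly the ideal. Surjectivity holds because `a ⊗ b = (a ⊗ 1)(1 ⊗ b)`.
-/

open TensorProduct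

/-- The linear map `V ⊗ V → T(V)` sending `v ⊗ w` to `ι v * ι w`. -/
noncomputable def quadMap (K V : Type*) [Field K] [AddCommGroup V] [Module K V] :
    V ⊗[K] V →ₗ[K] TensorAlgebra K V :=
  TensorProduct.lift
    ((LinearMap.mul K (TensorAlgebra K V) ∘ₗ TensorAlgebra.ι K).compl₂ (TensorAlgebra.ι K))

/-- The relation whose `RingQuot` is the quadratic algebra `T(V)/(R)`, i.e. the quotient of
the tensor algebra by the two-sided ideal generated by the image of `R ⊆ V ⊗ V` under
`v ⊗ w ↦ ι v * ι w`. -/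
def quadRel {K V : Type*} [Field K] [AddCommGroup V] [Module K V]
    (R : Submodule K (V ⊗[K] V)) (x y : TensorAlgebra K V) : Prop :=
  ∃ r ∈ R, x = quadMap K V r ∧ y = 0

/-- The quadratic algebra `T(V)/(R)`. -/
abbrev QuadraticAlgebra' {K V : Type*} [Field K] [AddCommGroup V] [Module K V]
    (R : Submodule K (V ⊗[K] V)) : Type _ :=
  RingQuot (quadRel R)

variable {K V W : Type*} [Field K] [AddCommGroup V] [Module K V] [AddCommGroup W] [Module K W]

/-- The algebra homomorphism `T(V × W) → (TV/(R)) ⊗ (TW/(S))` determined by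
`ι (v, w) ↦ (class of ι v) ⊗ 1 + 1 ⊗ (class of ι w)`. -/
noncomputable def prodToTensorOfQuotients (R : Submodule K (V ⊗[K] V))
    (S : Submodule K (W ⊗[K] W)) :
    TensorAlgebra K (V × W) →ₐ[K] QuadraticAlgebra' R ⊗[K] QuadraticAlgebra' S :=
  TensorAlgebra.lift K
    ((Algebra.TensorProduct.includeLeft :
        QuadraticAlgebra' R →ₐ[K] QuadraticAlgebra' R ⊗[K] QuadraticAlgebra' S).toLinearMap
          ∘ₗ (RingQuot.mkAlgHom K (quadRel R)).toLinearMap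
          ∘ₗ TensorAlgebra.ι K ∘ₗ LinearMap.fst K V W
      + (Algebra.TensorProduct.includeRight :
          QuadraticAlgebra' S →ₐ[K] QuadraticAlgebra' R ⊗[K] QuadraticAlgebra' S).toLinearMap
            ∘ₗ (RingQuot.mkAlgHom K (quadRel S)).toLinearMap
            ∘ₗ TensorAlgebra.ι K ∘ₗ LinearMap.snd K V W)


namespace TensorAlgebra

variable {R M N : Type*} [CommSemiring R] [AddCommMonoid M] [Module R M]
  [AddCommMonoid N] [Module R N]

noncomputable def map (f : M →ₗ[R] N) : TensorAlgebra R M →ₐ[R] TensorAlgebra R N :=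
  lift R (ι R ∘ₗ f)

@[simp]
lemma map_ι (f : M →ₗ[R] N) (m : M) : map f (ι R m) = ι R (f m) := by
  simp [map, lift_ι_apply]

lemma commute_of_commute_ι {A : Type*} [Semiring A] [Algebra R A]
    (f : TensorAlgebra R M →ₐ[R] A) (g : TensorAlgebra R N →ₐ[R] A)
    (h : ∀ m n, Commute (f (ι R m)) (g (ι R n))) (x : TensorAlgebra R M)
    (y : TensorAlgebra R N) : Commute (f x) (g y) := by
  have commute_ι (m : M) : Commute (f (ι R m)) (g y) := by
    induction y using TensorAlgebra.induction with
    | algebraMap r => simpa only [AlgHom.commutes] using Algebra.commute_algebraMap_right r _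
    | ι n => exact h m n
    | mul a b ha hb => simpa only [map_mul] using ha.mul_right hb
    | add a b ha hb => simpa only [map_add] using ha.add_right hb
  induction x using TensorAlgebra.induction with
  | algebraMap r => simpa only [AlgHom.commutes] using Algebra.commute_algebraMap_left r _
  | ι m => exact commute_ι m
  | mul a b ha hb => simpa only [map_mul] using ha.mul_left hb
  | add a b ha hb => simpa only [map_add] using ha.add_left hb

end TensorAlgebra

namespace Algebra.TensorProduct

variable {R A B C : Type*} [CommSemiring R] [Semiring A] [Algebra R A] [Semiring B]
  [Algebra R B] [Semiring C] [Algebra R C]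

lemma includeLeft_range_sup_includeRight_range :
    (includeLeft : A →ₐ[R] A ⊗[R] B).range ⊔ (includeRight : B →ₐ[R] A ⊗[R] B).range
      = ⊤ := by
  simpa [map_id] using (map_range (AlgHom.id R A) (AlgHom.id R B)).symm

lemma surjective_of_includeLeft_range_le_of_includeRight_range_le {φ : C →ₐ[R] A ⊗[R] B}
    (hA : (includeLeft : A →ₐ[R] A ⊗[R] B).range ≤ φ.range)
    (hB : (includeRight : B →ₐ[R] A ⊗[R] B).range ≤ φ.range) : Function.Surjective φ := by
  rw [← AlgHom.range_eq_top, ← top_le_iff, ← includeLeft_range_sup_includeRight_range]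
  exact sup_le hA hB

end Algebra.TensorProduct

lemma TwoSidedIdeal.ker_le_of_forall_eq_mk' {A B F : Type*} [Ring A] [Ring B] [FunLike F A B]
    [RingHomClass F A B] {I : TwoSidedIdeal A} (φ : F) (ψ : B →+* I.ringCon.Quotient)
    (h : ∀ x, ψ (φ x) = I.ringCon.mk' x) : ker φ ≤ I := by
  intro x hx
  rw [← ker_ringCon_mk' I, mem_ker, ← h, (mem_ker φ).1 hx, map_zero]

lemma quadMap_map (f : V →ₗ[K] W) (r : V ⊗[K] V) :
    quadMap K W (TensorProduct.map f f r) = TensorAlgebra.map f (quadMap K V r) := by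
  induction r using TensorProduct.induction_on with
  | zero => simp
  | tmul v v' => simp [quadMap]
  | add r r' hr hr' => simp only [map_add, hr, hr']

namespace QuadraticAlgebra'

variable {R : Submodule K (V ⊗[K] V)}

lemma mk_quadMap {r : V ⊗[K] V} (hr : r ∈ R) :
    RingQuot.mkAlgHom K (quadRel R) (quadMap K V r) = 0 := by
  simpa using RingQuot.mkAlgHom_rel K (s := quadRel R) ⟨r, hr, rfl, rfl⟩

noncomputable def lift {A : Type*} [Semiring A] [Algebra K A] (f : TensorAlgebra K V →ₐ[K] A)
    (hf : ∀ r ∈ R, f (quadMap K V r) = 0) : QuadraticAlgebra' R →ₐ[K] A :=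
  RingQuot.liftAlgHom K ⟨f, by rintro _ _ ⟨r, hr, rfl, rfl⟩; rw [hf r hr, map_zero]⟩

@[simp]
lemma lift_mk {A : Type*} [Semiring A] [Algebra K A] (f : TensorAlgebra K V →ₐ[K] A)
    (hf : ∀ r ∈ R, f (quadMap K V r) = 0) (x : TensorAlgebra K V) :
    lift f hf (RingQuot.mkAlgHom K (quadRel R) x) = f x :=
  RingQuot.liftAlgHom_mkAlgHom_apply K f _ x

end QuadraticAlgebra'

section prodToTensorOfQuotients

variable (R : Submodule K (V ⊗[K] V)) (S : Submodule K (W ⊗[K] W))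

def prodRelations : Set (TensorAlgebra K (V × W)) :=
  (quadMap K (V × W) ∘ₗ
      TensorProduct.map (LinearMap.inl K V W) (LinearMap.inl K V W)) '' (R : Set _)
    ∪ (quadMap K (V × W) ∘ₗ
        TensorProduct.map (LinearMap.inr K V W) (LinearMap.inr K V W)) '' (S : Set _)
    ∪ {x : TensorAlgebra K (V × W) | ∃ (v : V) (w : W),
        x = TensorAlgebra.ι K ((v, 0) : V × W) * TensorAlgebra.ι K ((0, w) : V × W)
          - TensorAlgebra.ι K ((0, w) : V × W) * TensorAlgebra.ι K ((v, 0) : V × W)}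

lemma prodToTensorOfQuotients_ι (v : V) (w : W) :
    prodToTensorOfQuotients R S (TensorAlgebra.ι K (v, w))
      = RingQuot.mkAlgHom K (quadRel R) (TensorAlgebra.ι K v) ⊗ₜ[K] 1
        + 1 ⊗ₜ[K] RingQuot.mkAlgHom K (quadRel S) (TensorAlgebra.ι K w) := by
  simp [prodToTensorOfQuotients, TensorAlgebra.lift_ι_apply]

lemma prodToTensorOfQuotients_comp_map_inl :
    (prodToTensorOfQuotients R S).comp (TensorAlgebra.map (LinearMap.inl K V W))
      = Algebra.TensorProduct.includeLeft.comp (RingQuot.mkAlgHom K (quadRel R)) := by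
  ext v
  simp [prodToTensorOfQuotients_ι]

lemma prodToTensorOfQuotients_comp_map_inr :
    (prodToTensorOfQuotients R S).comp (TensorAlgebra.map (LinearMap.inr K V W))
      = Algebra.TensorProduct.includeRight.comp (RingQuot.mkAlgHom K (quadRel S)) := by
  ext w
  simp [prodToTensorOfQuotients_ι]

lemma prodToTensorOfQuotients_surjective : Function.Surjective (prodToTensorOfQuotients R S) := by
  apply Algebra.TensorProduct.surjective_of_includeLeft_range_le_of_includeRight_range_le
  · rintro _ ⟨a, rfl⟩
    obtain ⟨x, rfl⟩ := RingQuot.mkAlgHom_surjective K _ a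
    exact ⟨_, AlgHom.congr_fun (prodToTensorOfQuotients_comp_map_inl R S) x⟩
  · rintro _ ⟨b, rfl⟩
    obtain ⟨y, rfl⟩ := RingQuot.mkAlgHom_surjective K _ b
    exact ⟨_, AlgHom.congr_fun (prodToTensorOfQuotients_comp_map_inr R S) y⟩

lemma prodRelations_subset_ker :
    prodRelations R S ⊆ TwoSidedIdeal.ker (prodToTensorOfQuotients R S) := by
  rintro _ ((⟨r, hr, rfl⟩ | ⟨s, hs, rfl⟩) | ⟨v, w, rfl⟩) <;>
    rw [SetLike.mem_coe, TwoSidedIdeal.mem_ker]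
  · rw [LinearMap.comp_apply, quadMap_map, ← AlgHom.comp_apply,
      prodToTensorOfQuotients_comp_map_inl, AlgHom.comp_apply,
      QuadraticAlgebra'.mk_quadMap hr, map_zero]
  · rw [LinearMap.comp_apply, quadMap_map, ← AlgHom.comp_apply,
      prodToTensorOfQuotients_comp_map_inr, AlgHom.comp_apply,
      QuadraticAlgebra'.mk_quadMap hs, map_zero]
  · simp [prodToTensorOfQuotients_ι]

abbrev ProdRelationsQuotient : Type _ := (TwoSidedIdeal.span (prodRelations R S)).ringCon.Quotient

namespace ProdRelationsQuotient

noncomputable def mk : TensorAlgebra K (V × W) →ₐ[K] ProdRelationsQuotient R S :=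
  RingCon.mkₐ K _

variable {R S} in
lemma mk_eq_zero {x : TensorAlgebra K (V × W)} (hx : x ∈ prodRelations R S) : mk R S x = 0 := by
  have hker : x ∈ TwoSidedIdeal.ker (TwoSidedIdeal.span (prodRelations R S)).ringCon.mk' := by
    rw [TwoSidedIdeal.ker_ringCon_mk']
    exact TwoSidedIdeal.subset_span hx
  exact (TwoSidedIdeal.mem_ker _).1 hker

noncomputable def ofLeft : QuadraticAlgebra' R →ₐ[K] ProdRelationsQuotient R S :=
  QuadraticAlgebra'.lift ((mk R S).comp (TensorAlgebra.map (LinearMap.inl K V W))) fun r hr => by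
    rw [AlgHom.comp_apply, ← quadMap_map]
    exact mk_eq_zero (Or.inl (Or.inl ⟨r, hr, rfl⟩))

noncomputable def ofRight : QuadraticAlgebra' S →ₐ[K] ProdRelationsQuotient R S :=
  QuadraticAlgebra'.lift ((mk R S).comp (TensorAlgebra.map (LinearMap.inr K V W))) fun s hs => by
    rw [AlgHom.comp_apply, ← quadMap_map]
    exact mk_eq_zero (Or.inl (Or.inr ⟨s, hs, rfl⟩))

lemma commute_ofLeft_ofRight (a : QuadraticAlgebra' R) (b : QuadraticAlgebra' S) :
    Commute (ofLeft R S a) (ofRight R S b) := by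
  obtain ⟨x, rfl⟩ := RingQuot.mkAlgHom_surjective K _ a
  obtain ⟨y, rfl⟩ := RingQuot.mkAlgHom_surjective K _ b
  simp only [ofLeft, ofRight, QuadraticAlgebra'.lift_mk]
  refine TensorAlgebra.commute_of_commute_ι _ _ (fun v w => ?_) x y
  have hvw := mk_eq_zero (R := R) (S := S) (Or.inr ⟨v, w, rfl⟩)
  rw [map_sub, map_mul, map_mul, sub_eq_zero] at hvw
  simp only [AlgHom.comp_apply, TensorAlgebra.map_ι, LinearMap.inl_apply, LinearMap.inr_apply]
  exact hvw

noncomputable def ofTensor :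
    QuadraticAlgebra' R ⊗[K] QuadraticAlgebra' S →ₐ[K] ProdRelationsQuotient R S :=
  Algebra.TensorProduct.lift (ofLeft R S) (ofRight R S) (commute_ofLeft_ofRight R S)

lemma ofTensor_comp_prodToTensorOfQuotients :
    (ofTensor R S).comp (prodToTensorOfQuotients R S) = mk R S := by
  ext <;> simp [ofTensor, ofLeft, ofRight, prodToTensorOfQuotients_ι]

end ProdRelationsQuotient

lemma ker_prodToTensorOfQuotients :
    TwoSidedIdeal.ker (prodToTensorOfQuotients R S) = TwoSidedIdeal.span (prodRelations R S) :=
  le_antisymm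
    (TwoSidedIdeal.ker_le_of_forall_eq_mk' _ (ProdRelationsQuotient.ofTensor R S).toRingHom
      (AlgHom.congr_fun (ProdRelationsQuotient.ofTensor_comp_prodToTensorOfQuotients R S)))
    (TwoSidedIdeal.span_le.2 (prodRelations_subset_ker R S))

end prodToTensorOfQuotients

/-- `Φ : T(V × W) → (TV/(R)) ⊗ (TW/(S))` is surjective, with kernel the
two-sided ideal generated by the images of `R` and `S` and the commutators
`ι(v,0) * ι(0,w) - ι(0,w) * ι(v,0)`. -/
theorem prodToTensorOfQuotients_surjective_ker (R : Submodule K (V ⊗[K] V))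
    (S : Submodule K (W ⊗[K] W)) :
    Function.Surjective (prodToTensorOfQuotients R S)
      ∧ TwoSidedIdeal.ker (prodToTensorOfQuotients R S)
        = TwoSidedIdeal.span
            ((quadMap K (V × W) ∘ₗ
                TensorProduct.map (LinearMap.inl K V W) (LinearMap.inl K V W)) '' (R : Set _)
              ∪ (quadMap K (V × W) ∘ₗ
                  TensorProduct.map (LinearMap.inr K V W) (LinearMap.inr K V W)) '' (S : Set _)
              ∪ {x : TensorAlgebra K (V × W) | ∃ (v : V) (w : W),
                  x = TensorAlgebra.ι K ((v, 0) : V × W) * TensorAlgebra.ι K ((0, w) : V × W)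
                    - TensorAlgebra.ι K ((0, w) : V × W)
                      * TensorAlgebra.ι K ((v, 0) : V × W)}) :=
  ⟨prodToTensorOfQuotients_surjective R S, ker_prodToTensorOfQuotients R S⟩
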